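/- Let F(x,y) ∈ 𝔬[[x,y]] be a (p-1)-lacunary formal group law, i.e., F = ∑_{j≥0} H_j with each H_j homogeneous of degree 1 + j(p-1). Let 𝔒 be an 𝔬-algebra and λ ∈ 𝔒. Then the λ-blowup F^{(λ)} = ∑_{j≥0} λ^j H_j is again a formal group law over 𝔒. -/

import Mathlib

open MvPowerSeries

/-- Substitution of the family `g : σ → R[[τ]]` of power series (each of positive
order) into the multivariable power series `f ∈ R[[σ]]`: since each `g i` has no
constant term, the coefficient of a monomial `m` in `f(g)` only involves the
monomials of `f` of total degree at most `|m|`, so it is given by a finite sum. -/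
noncomputable def msubst {σ τ R : Type*} [Fintype σ] [DecidableEq σ] [CommRing R]
    (f : MvPowerSeries σ R) (g : σ → MvPowerSeries τ R) : MvPowerSeries τ R :=
  fun m =>
    ∑ d ∈ Finset.Iic (Finsupp.equivFunOnFinite.symm
        (fun _ : σ => m.sum fun _ v => v)),
      MvPowerSeries.coeff d f * MvPowerSeries.coeff m (∏ i, g i ^ d i)

/-- `F ∈ R[[x,y]]` is a formal group law: `F(x,0) = x`, `F(0,y) = y`, and
`F(F(x,y),z) = F(x,F(y,z))`. -/
def IsFormalGroupLaw {R : Type*} [CommRing R] (F : MvPowerSeries (Fin 2) R) : Prop :=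
  msubst F ![(X 0 : MvPowerSeries (Fin 2) R), 0] = X 0 ∧
  msubst F ![(0 : MvPowerSeries (Fin 2) R), X 1] = X 1 ∧
  msubst F ![msubst F ![(X 0 : MvPowerSeries (Fin 3) R), X 1], X 2] =
    msubst F ![(X 0 : MvPowerSeries (Fin 3) R), msubst F ![X 1, X 2]]

/-- Composition `f ∘ g` of one-variable power series, `g` having positive order. -/
noncomputable def scomp {R : Type*} [CommRing R] (f g : PowerSeries R) :
    PowerSeries R :=
  msubst f (fun _ : Unit => g)

/-- `g` is an endomorphism of the formal group law `F`: `g` has no constant term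
and `g(F(x,y)) = F(g(x), g(y))`. -/
def IsEndoOf {R : Type*} [CommRing R] (g : PowerSeries R)
    (F : MvPowerSeries (Fin 2) R) : Prop :=
  PowerSeries.constantCoeff g = 0 ∧
  msubst g (fun _ : Unit => F) =
    msubst F ![msubst g (fun _ : Unit => (X 0 : MvPowerSeries (Fin 2) R)),
      msubst g (fun _ : Unit => (X 1 : MvPowerSeries (Fin 2) R))]

/-- A power series is `(p-1)`-lacunary if its only (possibly) nonzero homogeneous
components are in degrees `≡ 1 mod (p-1)`, i.e. of the form `1 + j(p-1)`. -/
def Lacunary (p : ℕ) {σ R : Type*} [CommRing R] (F : MvPowerSeries σ R) : Prop :=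
  ∀ m : σ →₀ ℕ, MvPowerSeries.coeff m F ≠ 0 →
    ∃ j : ℕ, (m.sum fun _ v => v) = 1 + j * (p - 1)

/-- The `λ`-blowup of a `(p-1)`-lacunary power series `G = ∑_j H_j` (with `H_j`
homogeneous of degree `1 + j(p-1)`), namely `G^{(λ)} = ∑_j λ^j H_j`. -/
noncomputable def blowup (p : ℕ) {σ R : Type*} [CommRing R] (lam : R)
    (F : MvPowerSeries σ R) : MvPowerSeries σ R :=
  fun m =>
    lam ^ (((m.sum fun _ v => v) - 1) / (p - 1)) * MvPowerSeries.coeff m F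



/-!
Write `|m|` for the total degree of a monomial and `q = p - 1`; the blowup multiplies the
coefficient of `x^m` by `λ^((|m| - 1) / q)`. For series whose degrees lie in `k + qℕ` and
`k' + qℕ` the exponents add up under multiplication, so `∏ gᵢ ^ dᵢ` of lacunary `gᵢ` is rescaled
with offset `|d|`. In the substitution `G(g)` the term `coeff d G * coeff m (∏ gᵢ ^ dᵢ)` thus
acquires `λ^((|d| - 1) / q) * λ^((|m| - |d|) / q) = λ^((|m| - 1) / q)`: blowing up commutes with
substituting lacunary series. As `X i` and `0` are lacunary and fixed by the blowup, the formal
group law identities of `F` carry over.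
-/

section DegreeScale

variable {τ R : Type*} [CommRing R] {q k : ℕ}

def DegreeLacunary (q k : ℕ) (A : MvPowerSeries τ R) : Prop :=
  ∀ m : τ →₀ ℕ, coeff m A ≠ 0 → ∃ j, m.degree = k + j * q

/-- Truncated subtraction and `n / 0 = 0` are harmless here: on the support of a
`DegreeLacunary q k` series the exponent is the `j` with `|m| = k + j * q` when `q ≠ 0`, and
`degreeScale 0 k λ` is the identity. -/
noncomputable def degreeScale (q k : ℕ) (lam : R) (A : MvPowerSeries τ R) :
    MvPowerSeries τ R :=
  fun m => lam ^ ((m.degree - k) / q) * coeff m A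

theorem lacunary_iff_degreeLacunary (p : ℕ) (A : MvPowerSeries τ R) :
    Lacunary p A ↔ DegreeLacunary (p - 1) 1 A :=
  Iff.rfl

theorem blowup_eq_degreeScale (p : ℕ) (lam : R) (A : MvPowerSeries τ R) :
    blowup p lam A = degreeScale (p - 1) 1 lam A :=
  rfl

theorem coeff_degreeScale (lam : R) (A : MvPowerSeries τ R) (m : τ →₀ ℕ) :
    coeff m (degreeScale q k lam A) = lam ^ ((m.degree - k) / q) * coeff m A :=
  rfl

theorem Nat.add_tsub_add_div_of_eq {q a b k k' i j : ℕ} (ha : a = k + i * q)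
    (hb : b = k' + j * q) : (a + b - (k + k')) / q = (a - k) / q + (b - k') / q := by
  subst ha hb
  rw [show k + i * q + (k' + j * q) - (k + k') = i * q + j * q by omega,
    Nat.add_sub_cancel_left, Nat.add_sub_cancel_left]
  exact Nat.add_div_of_dvd_right (dvd_mul_left q i)

theorem Nat.tsub_div_eq_add_of_eq {q a b c i j : ℕ} (hb : b = a + i * q)
    (hc : c = b + j * q) : (c - a) / q = (b - a) / q + (c - b) / q := by
  subst hb hc
  rw [show a + i * q + j * q - a = i * q + j * q by omega, Nat.add_sub_cancel_left,
    Nat.add_sub_cancel_left]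
  exact Nat.add_div_of_dvd_right (dvd_mul_left q i)

theorem DegreeLacunary.map {S : Type*} [CommRing S] (f : R →+* S) {A : MvPowerSeries τ R}
    (hA : DegreeLacunary q k A) : DegreeLacunary q k (map f A) := fun m hm =>
  hA m fun h => hm (by rw [coeff_map, h, map_zero])

theorem DegreeLacunary.degreeScale {q' k' : ℕ} (lam : R) {A : MvPowerSeries τ R}
    (hA : DegreeLacunary q k A) : DegreeLacunary q k (degreeScale q' k' lam A) := fun m hm =>
  hA m fun h => hm (by rw [coeff_degreeScale, h, mul_zero])

theorem degreeLacunary_zero : DegreeLacunary q k (0 : MvPowerSeries τ R) := fun _ hm =>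
  absurd (map_zero _) hm

theorem degreeScale_zero (lam : R) : degreeScale q k lam (0 : MvPowerSeries τ R) = 0 := by
  ext m
  rw [coeff_degreeScale, map_zero, mul_zero]

variable [DecidableEq τ]

theorem degreeLacunary_X (i : τ) : DegreeLacunary q 1 (X i : MvPowerSeries τ R) := by
  intro m hm
  rw [coeff_X] at hm
  split_ifs at hm with h
  · exact ⟨0, by simp [h]⟩
  · exact absurd rfl hm

theorem degreeScale_X (lam : R) (i : τ) :
    degreeScale q 1 lam (X i : MvPowerSeries τ R) = X i := by
  ext m
  rw [coeff_degreeScale, coeff_X]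
  split_ifs with h
  · simp [h]
  · rw [mul_zero]

theorem degreeLacunary_one : DegreeLacunary q 0 (1 : MvPowerSeries τ R) := by
  intro m hm
  rw [coeff_one] at hm
  split_ifs at hm with h
  · exact ⟨0, by simp [h]⟩
  · exact absurd rfl hm

theorem degreeScale_one (lam : R) : degreeScale q 0 lam (1 : MvPowerSeries τ R) = 1 := by
  ext m
  rw [coeff_degreeScale, coeff_one]
  split_ifs with hm
  · simp [hm]
  · rw [mul_zero]

theorem DegreeLacunary.mul {k' : ℕ} {A B : MvPowerSeries τ R} (hA : DegreeLacunary q k A)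
    (hB : DegreeLacunary q k' B) : DegreeLacunary q (k + k') (A * B) := by
  intro m hm
  rw [coeff_mul] at hm
  obtain ⟨⟨u, v⟩, huv, hne⟩ := Finset.exists_ne_zero_of_sum_ne_zero hm
  obtain ⟨i, hu⟩ := hA u (left_ne_zero_of_mul hne)
  obtain ⟨j, hv⟩ := hB v (right_ne_zero_of_mul hne)
  refine ⟨i + j, ?_⟩
  rw [← Finset.HasAntidiagonal.mem_antidiagonal.mp huv, map_add, hu, hv]
  ring

theorem degreeScale_mul {k' : ℕ} (lam : R) {A B : MvPowerSeries τ R}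
    (hA : DegreeLacunary q k A) (hB : DegreeLacunary q k' B) :
    degreeScale q (k + k') lam (A * B) = degreeScale q k lam A * degreeScale q k' lam B := by
  ext m
  simp only [coeff_degreeScale, coeff_mul, Finset.mul_sum]
  refine Finset.sum_congr rfl fun ⟨u, v⟩ huv => ?_
  rw [mul_mul_mul_comm]
  by_cases hne : coeff u A * coeff v B = 0
  · rw [hne, mul_zero, mul_zero]
  obtain ⟨i, hu⟩ := hA u (left_ne_zero_of_mul hne)
  obtain ⟨j, hv⟩ := hB v (right_ne_zero_of_mul hne)
  rw [← Finset.HasAntidiagonal.mem_antidiagonal.mp huv, map_add,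
    Nat.add_tsub_add_div_of_eq hu hv, pow_add]

theorem DegreeLacunary.pow {A : MvPowerSeries τ R} (hA : DegreeLacunary q k A) (n : ℕ) :
    DegreeLacunary q (n * k) (A ^ n) := by
  induction n with
  | zero => simpa using degreeLacunary_one
  | succ n ih => simpa [pow_succ, Nat.succ_mul] using ih.mul hA

theorem degreeScale_pow (lam : R) {A : MvPowerSeries τ R} (hA : DegreeLacunary q k A) (n : ℕ) :
    degreeScale q (n * k) lam (A ^ n) = degreeScale q k lam A ^ n := by
  induction n with
  | zero => simpa using degreeScale_one lam
  | succ n ih => rw [pow_succ, pow_succ, Nat.succ_mul, degreeScale_mul lam (hA.pow n) hA, ih]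

theorem DegreeLacunary.prod {ι : Type*} {w : ι → ℕ} {g : ι → MvPowerSeries τ R}
    (hg : ∀ i, DegreeLacunary q (w i) (g i)) (d : ι → ℕ) (s : Finset ι) :
    DegreeLacunary q (∑ i ∈ s, d i * w i) (∏ i ∈ s, g i ^ d i) := by
  classical
  induction s using Finset.induction_on with
  | empty => simpa using degreeLacunary_one
  | insert i s hi ih =>
    rw [Finset.prod_insert hi, Finset.sum_insert hi]
    exact ((hg i).pow (d i)).mul ih

theorem degreeScale_prod {ι : Type*} {w : ι → ℕ} (lam : R) {g : ι → MvPowerSeries τ R}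
    (hg : ∀ i, DegreeLacunary q (w i) (g i)) (d : ι → ℕ) (s : Finset ι) :
    degreeScale q (∑ i ∈ s, d i * w i) lam (∏ i ∈ s, g i ^ d i) =
      ∏ i ∈ s, degreeScale q (w i) lam (g i) ^ d i := by
  classical
  induction s using Finset.induction_on with
  | empty => simpa using degreeScale_one lam
  | insert i s hi ih =>
    rw [Finset.prod_insert hi, Finset.sum_insert hi, Finset.prod_insert hi,
      degreeScale_mul lam ((hg i).pow (d i)) (DegreeLacunary.prod hg d s),
      degreeScale_pow lam (hg i), ih]

end DegreeScale

section Substitution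

variable {σ τ R : Type*} [Fintype σ] [CommRing R]

theorem coeff_msubst [DecidableEq σ] (G : MvPowerSeries σ R) (g : σ → MvPowerSeries τ R)
    (m : τ →₀ ℕ) :
    coeff m (msubst G g) =
      ∑ d ∈ Finset.Iic (Finsupp.equivFunOnFinite.symm fun _ : σ => m.degree),
        coeff d G * coeff m (∏ i, g i ^ d i) :=
  rfl

theorem map_msubst [DecidableEq σ] {S : Type*} [CommRing S] (f : R →+* S)
    (G : MvPowerSeries σ R) (g : σ → MvPowerSeries τ R) :
    map f (msubst G g) = msubst (map f G) (map f ∘ g) := by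
  ext m
  simp only [coeff_map, coeff_msubst, map_sum, map_mul, Function.comp_apply, ← map_pow,
    ← map_prod]

variable [DecidableEq τ] {q k : ℕ}

theorem DegreeLacunary.prod_pow_finsupp {g : σ → MvPowerSeries τ R}
    (hg : ∀ i, DegreeLacunary q 1 (g i)) (d : σ →₀ ℕ) :
    DegreeLacunary q d.degree (∏ i, g i ^ d i) := by
  simpa [Finsupp.degree_eq_sum] using DegreeLacunary.prod hg d Finset.univ

theorem degreeScale_prod_pow_finsupp (lam : R) {g : σ → MvPowerSeries τ R}
    (hg : ∀ i, DegreeLacunary q 1 (g i)) (d : σ →₀ ℕ) :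
    ∏ i, degreeScale q 1 lam (g i) ^ d i = degreeScale q d.degree lam (∏ i, g i ^ d i) := by
  simpa [Finsupp.degree_eq_sum] using (degreeScale_prod lam hg d Finset.univ).symm

variable [DecidableEq σ]

theorem DegreeLacunary.msubst {G : MvPowerSeries σ R} (hG : DegreeLacunary q k G)
    {g : σ → MvPowerSeries τ R} (hg : ∀ i, DegreeLacunary q 1 (g i)) :
    DegreeLacunary q k (msubst G g) := by
  intro m hm
  rw [coeff_msubst] at hm
  obtain ⟨d, -, hne⟩ := Finset.exists_ne_zero_of_sum_ne_zero hm
  obtain ⟨i, hd⟩ := hG d (left_ne_zero_of_mul hne)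
  obtain ⟨j, hm⟩ := DegreeLacunary.prod_pow_finsupp hg d m (right_ne_zero_of_mul hne)
  exact ⟨i + j, by rw [hm, hd]; ring⟩

theorem msubst_degreeScale (lam : R) {G : MvPowerSeries σ R} (hG : DegreeLacunary q k G)
    {g : σ → MvPowerSeries τ R} (hg : ∀ i, DegreeLacunary q 1 (g i)) :
    msubst (degreeScale q k lam G) (degreeScale q 1 lam ∘ g) =
      degreeScale q k lam (msubst G g) := by
  ext m
  simp only [coeff_msubst, coeff_degreeScale, Function.comp_apply,
    degreeScale_prod_pow_finsupp lam hg, Finset.mul_sum]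
  refine Finset.sum_congr rfl fun d _ => ?_
  rw [mul_mul_mul_comm]
  by_cases hne : coeff d G * coeff m (∏ i, g i ^ d i) = 0
  · rw [hne, mul_zero, mul_zero]
  obtain ⟨i, hd⟩ := hG d (left_ne_zero_of_mul hne)
  obtain ⟨j, hm⟩ := DegreeLacunary.prod_pow_finsupp hg d m (right_ne_zero_of_mul hne)
  rw [Nat.tsub_div_eq_add_of_eq hd hm, pow_add]

end Substitution

theorem IsFormalGroupLaw.map {R S : Type*} [CommRing R] [CommRing S] (f : R →+* S)
    {F : MvPowerSeries (Fin 2) R} (hF : IsFormalGroupLaw F) :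
    IsFormalGroupLaw (MvPowerSeries.map f F) := by
  obtain ⟨hx, hy, hassoc⟩ := hF
  have subst_map {n : ℕ} (a b : MvPowerSeries (Fin n) R) :
      msubst (MvPowerSeries.map f F) ![MvPowerSeries.map f a, MvPowerSeries.map f b] =
        MvPowerSeries.map f (msubst F ![a, b]) := by
    rw [map_msubst, ← FinVec.map_eq]
    rfl
  refine ⟨?_, ?_, ?_⟩
  · simpa [hx] using subst_map (n := 2) (X 0) 0
  · simpa [hy] using subst_map (n := 2) 0 (X 1)
  · simp only [← map_X f, subst_map, hassoc]

theorem isFormalGroupLaw_degreeScale {R : Type*} [CommRing R] {q : ℕ} (lam : R)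
    {F : MvPowerSeries (Fin 2) R} (hF : IsFormalGroupLaw F) (hlac : DegreeLacunary q 1 F) :
    IsFormalGroupLaw (degreeScale q 1 lam F) := by
  obtain ⟨hx, hy, hassoc⟩ := hF
  have lacunary_pair {n : ℕ} {a b : MvPowerSeries (Fin n) R} (ha : DegreeLacunary q 1 a)
      (hb : DegreeLacunary q 1 b) : ∀ i, DegreeLacunary q 1 (![a, b] i) :=
    Fin.forall_fin_two.2 ⟨ha, hb⟩
  have subst_scale {n : ℕ} {a b : MvPowerSeries (Fin n) R} (ha : DegreeLacunary q 1 a)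
      (hb : DegreeLacunary q 1 b) :
      msubst (degreeScale q 1 lam F) ![degreeScale q 1 lam a, degreeScale q 1 lam b] =
        degreeScale q 1 lam (msubst F ![a, b]) := by
    rw [← msubst_degreeScale lam hlac (lacunary_pair ha hb), ← FinVec.map_eq]
    rfl
  refine ⟨?_, ?_, ?_⟩
  · simpa [hx, degreeScale_X, degreeScale_zero] using
      subst_scale (n := 2) (degreeLacunary_X 0) degreeLacunary_zero
  · simpa [hy, degreeScale_X, degreeScale_zero] using
      subst_scale (n := 2) degreeLacunary_zero (degreeLacunary_X 1)
  · have h01 := hlac.msubst <| lacunary_pair (n := 3) (degreeLacunary_X 0) (degreeLacunary_X 1)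
    have h12 := hlac.msubst <| lacunary_pair (n := 3) (degreeLacunary_X 1) (degreeLacunary_X 2)
    rw [← degreeScale_X (q := q) lam (0 : Fin 3), ← degreeScale_X (q := q) lam (1 : Fin 3),
      ← degreeScale_X (q := q) lam (2 : Fin 3),
      subst_scale (degreeLacunary_X 0) (degreeLacunary_X 1),
      subst_scale (degreeLacunary_X 1) (degreeLacunary_X 2),
      subst_scale h01 (degreeLacunary_X 2), subst_scale (degreeLacunary_X 0) h12, hassoc]

theorem stmt_13_general (p : ℕ)
    (O : Type*) [CommRing O] (F : MvPowerSeries (Fin 2) O)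
    (hF : IsFormalGroupLaw F) (hlac : Lacunary p F)
    (O' : Type*) [CommRing O'] [Algebra O O'] (lam : O') :
    IsFormalGroupLaw (blowup p lam (MvPowerSeries.map (algebraMap O O') F)) ∧
    Lacunary p (blowup p lam (MvPowerSeries.map (algebraMap O O') F)) := by
  rw [lacunary_iff_degreeLacunary] at hlac ⊢
  rw [blowup_eq_degreeScale]
  have hlac' := hlac.map (algebraMap O O')
  exact ⟨isFormalGroupLaw_degreeScale lam (hF.map _) hlac', hlac'.degreeScale lam⟩

/-- **The `λ`-blowup of a `(p-1)`-lacunary formal group law is a formal group law.**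
Let `F ∈ 𝔬[[x,y]]` be a `(p-1)`-lacunary formal group law, `𝔒` an `𝔬`-algebra and
`λ ∈ 𝔒`.  Then the `λ`-blowup `F^{(λ)} = ∑_j λ^j H_j` (of the image of `F` in
`𝔒[[x,y]]`) is again a `(p-1)`-lacunary formal group law over `𝔒`. -/
theorem stmt_13 (p : ℕ) [Fact p.Prime]
    (O : Type*) [CommRing O] (F : MvPowerSeries (Fin 2) O)
    (hF : IsFormalGroupLaw F) (hlac : Lacunary p F)
    (O' : Type*) [CommRing O'] [Algebra O O'] (lam : O') :
    IsFormalGroupLaw (blowup p lam (MvPowerSeries.map (algebraMap O O') F)) ∧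
    Lacunary p (blowup p lam (MvPowerSeries.map (algebraMap O O') F)) :=
  stmt_13_general p O F hF hlac O' lam
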